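/- In the setting of the hyperelliptic residue data, the coefficients β_n satisfy Σ_{n=1}^N β_n = −g. -/

import Mathlib

/-!
Both factors of `β_n` are values at `u_n` of polynomials divided by products: `A12_n` is
`F(u_n) / ∏_{m≠n} (u_n − u_m)` with `deg F ≤ 2g − 1`, and the second factor is
`G(u_n) / ∏_β (u_n − q_β)` with `deg G ≤ g`. So `β_n = (F G)(u_n) / ∏_{x ≠ u_n} (u_n − x)`, the
product running over the `3g + 1` nodes `q_1, …, q_g, u_1, …, u_N`. As `deg (F G) < 3g`, the sum of
`(F G)(x_i) / ∏_{j≠i} (x_i − x_j)` over all nodes, which is the coefficient of `x^{3g}` in the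
Lagrange interpolant of `F G`, vanishes. At a node `q_k` one has
`F(q_k) = ∏_{β≠k} (q_k − q_β) / w_k` and `G(q_k) = 1 / w_k`, so that node contributes
`1 / (w_k² ∏_m (q_k − u_m)) = 1`.
-/

open Finset

/-- The residue `A12^{(n)}` of the function `A₁₂(u)` associated with the differential `Ω`
on the hyperelliptic curve `v² = ∏_{m=1}^N (u − u_m)`, as an explicit rational expression:
`A12_n = [Σ_j (1/(u_n−q_j) + α_j)·∏_{β≠j}(u_n−q_β)/(w_j·∏_{β≠j}(q_j−q_β))]
          · ∏_β (u_n−q_β) / ∏_{m≠n}(u_n−u_m)`. -/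
noncomputable def A12res {g N : ℕ} (u : Fin N → ℂ) (q w a : Fin g → ℂ) (n : Fin N) : ℂ :=
  (∑ j, (1 / (u n - q j) + a j) * (∏ β ∈ univ.erase j, (u n - q β)) /
      (w j * ∏ β ∈ univ.erase j, (q j - q β))) *
    (∏ β, (u n - q β)) / ∏ m ∈ univ.erase n, (u n - u m)

/-- The value `Ω_∞ = Ω(P_∞) = −2·Σ_j α_j/(w_j·∏_{β≠j}(q_j−q_β))`. -/
noncomputable def OmegaInfty {g : ℕ} (q w a : Fin g → ℂ) : ℂ :=
  -2 * ∑ j, a j / (w j * ∏ β ∈ univ.erase j, (q j - q β))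

/-- The coefficient
`β_n = A12_n·(Σ_j 1/(w_j·(u_n−q_j)·∏_{β≠j}(q_j−q_β)) − Ω_∞/2)`. -/
noncomputable def betaCoef {g N : ℕ} (u : Fin N → ℂ) (q w a : Fin g → ℂ) (n : Fin N) : ℂ :=
  A12res u q w a n *
    ((∑ j, 1 / (w j * (u n - q j) * ∏ β ∈ univ.erase j, (q j - q β))) -
      OmegaInfty q w a / 2)

open Polynomial

theorem Lagrange.sum_eval_div_prod_erase_eq_zero {F ι : Type*} [Field F] [DecidableEq ι]
    {s : Finset ι} {v : ι → F} (hvs : Set.InjOn v s) {P : F[X]} (hP : P.degree < ↑(#s - 1)) :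
    ∑ i ∈ s, P.eval (v i) / ∏ j ∈ s.erase i, (v i - v j) = 0 := by
  rw [← coeff_eq_sum hvs (hP.trans_le (by exact_mod_cast Nat.sub_le _ _)),
    coeff_eq_zero_of_degree_lt hP]

theorem Lagrange.eval_basis {F ι : Type*} [Field F] [DecidableEq ι] (s : Finset ι) (v : ι → F)
    (i : ι) (x : F) :
    (Lagrange.basis s v i).eval x =
      (∏ j ∈ s.erase i, (x - v j)) / ∏ j ∈ s.erase i, (v i - v j) := by
  simp [Lagrange.basis, Lagrange.basisDivisor, eval_prod, prod_mul_distrib, div_eq_mul_inv,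
    mul_comm]

section SumType

variable {ι κ M : Type*} [Fintype ι] [Fintype κ] [DecidableEq ι] [DecidableEq κ] [CommMonoid M]
  (f : ι ⊕ κ → M)

theorem Finset.prod_univ_erase_inl (i : ι) :
    ∏ x ∈ univ.erase (Sum.inl i), f x =
      (∏ j ∈ univ.erase i, f (Sum.inl j)) * ∏ k, f (Sum.inr k) := by
  rw [show univ.erase (Sum.inl i) = (univ.erase i).disjSum (univ : Finset κ) by
    ext (_ | _) <;> simp, prod_disjSum]

theorem Finset.prod_univ_erase_inr (k : κ) :
    ∏ x ∈ univ.erase (Sum.inr k), f x =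
      (∏ i, f (Sum.inl i)) * ∏ l ∈ univ.erase k, f (Sum.inr l) := by
  rw [show univ.erase (Sum.inr k) = (univ : Finset ι).disjSum (univ.erase k) by
    ext (_ | _) <;> simp, prod_disjSum]

end SumType

section Residues

variable {g N : ℕ} (u : Fin N → ℂ) (q w a : Fin g → ℂ)

noncomputable def A12Poly : ℂ[X] :=
  ∑ j, C (w j)⁻¹ * Lagrange.basis univ q j *
    (Lagrange.nodal (univ.erase j) q + C (a j) * Lagrange.nodal univ q)

noncomputable def OmegaPoly : ℂ[X] :=
  Lagrange.interpolate univ q (fun j => (w j)⁻¹) -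
    C (OmegaInfty q w a / 2) * Lagrange.nodal univ q

variable {q}

theorem A12res_eq_eval_div {n : Fin N} (hqu : ∀ j, q j ≠ u n) :
    A12res u q w a n = (A12Poly q w a).eval (u n) / ∏ m ∈ univ.erase n, (u n - u m) := by
  rw [A12res, A12Poly, eval_finsetSum, sum_mul]
  congr 1
  refine sum_congr rfl fun j _ => ?_
  have hj : u n - q j ≠ 0 := sub_ne_zero.2 (hqu j).symm
  simp only [eval_mul, eval_add, eval_C, Lagrange.eval_nodal, Lagrange.eval_basis,
    ← mul_prod_erase univ (fun β => u n - q β) (mem_univ j)]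
  field_simp

theorem sum_sub_OmegaInfty_eq_eval_div {x : ℂ} (hx : ∀ j, x ≠ q j) :
    (∑ j, 1 / (w j * (x - q j) * ∏ β ∈ univ.erase j, (q j - q β))) - OmegaInfty q w a / 2 =
      (OmegaPoly q w a).eval x / ∏ β, (x - q β) := by
  have hQ : ∏ β, (x - q β) ≠ 0 := prod_ne_zero_iff.2 fun β _ => sub_ne_zero.2 (hx β)
  rw [OmegaPoly, eval_sub, Lagrange.eval_interpolate_not_at_node _ fun j _ => hx j, eval_mul,
    eval_C, Lagrange.eval_nodal, mul_comm (OmegaInfty q w a / 2), ← mul_sub,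
    mul_div_cancel_left₀ _ hQ]
  congr 1
  refine sum_congr rfl fun j _ => ?_
  rw [Lagrange.nodalWeight, prod_inv_distrib]
  field_simp

theorem betaCoef_eq_eval_div {n : Fin N} (hqu : ∀ j, q j ≠ u n) :
    betaCoef u q w a n = (A12Poly q w a * OmegaPoly q w a).eval (u n) /
      ∏ x ∈ univ.erase (Sum.inr n), (u n - Sum.elim q u x) := by
  rw [betaCoef, A12res_eq_eval_div u w a hqu,
    sum_sub_OmegaInfty_eq_eval_div w a fun j => (hqu j).symm, prod_univ_erase_inr, eval_mul]
  simp only [Sum.elim_inl, Sum.elim_inr]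
  ring

theorem eval_A12Poly_node (hq : Function.Injective q) (k : Fin g) :
    (A12Poly q w a).eval (q k) = (w k)⁻¹ * ∏ β ∈ univ.erase k, (q k - q β) := by
  rw [A12Poly, eval_finsetSum, sum_eq_single k]
  · simp [Lagrange.eval_basis_self hq.injOn (mem_univ k), Lagrange.eval_nodal_at_node (mem_univ k),
      Lagrange.eval_nodal]
  · intro j _ hjk
    simp [Lagrange.eval_basis_of_ne hjk (mem_univ k)]
  · simp

theorem eval_OmegaPoly_node (hq : Function.Injective q) (k : Fin g) :
    (OmegaPoly q w a).eval (q k) = (w k)⁻¹ := by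
  rw [OmegaPoly, eval_sub, Lagrange.eval_interpolate_at_node _ hq.injOn (mem_univ k), eval_mul,
    Lagrange.eval_nodal_at_node (mem_univ k), mul_zero, sub_zero]

theorem eval_div_prod_erase_inl_eq_one (hq : Function.Injective q) {k : Fin g}
    (hw : w k ^ 2 * ∏ m, (q k - u m) = 1) :
    (A12Poly q w a * OmegaPoly q w a).eval (q k) /
      ∏ x ∈ univ.erase (Sum.inl k), (q k - Sum.elim q u x) = 1 := by
  have hD : ∏ β ∈ univ.erase k, (q k - q β) ≠ 0 :=
    prod_ne_zero_iff.2 fun β hβ => sub_ne_zero.2 (hq.ne (ne_of_mem_erase hβ).symm)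
  rw [eval_mul, eval_A12Poly_node w a hq, eval_OmegaPoly_node w a hq, prod_univ_erase_inl]
  simp only [Sum.elim_inl, Sum.elim_inr]
  calc _ = (w k ^ 2 * ∏ m, (q k - u m))⁻¹ := by field_simp
    _ = 1 := by rw [hw, inv_one]

theorem natDegree_A12Poly_le (hq : Function.Injective q) :
    (A12Poly q w a).natDegree ≤ 2 * g - 1 := by
  refine natDegree_sum_le_of_forall_le _ _ fun j _ => ?_
  have hL : (C (w j)⁻¹ * Lagrange.basis univ q j).natDegree ≤ g - 1 :=
    (natDegree_C_mul_le _ _).trans (by simp [Lagrange.natDegree_basis hq.injOn (mem_univ j)])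
  have hR : (Lagrange.nodal (univ.erase j) q + C (a j) * Lagrange.nodal univ q).natDegree ≤ g := by
    refine natDegree_add_le_of_degree_le ?_ ((natDegree_C_mul_le _ _).trans ?_) <;>
      simp [Lagrange.natDegree_nodal]
  calc _ ≤ (g - 1) + g := natDegree_mul_le_of_le hL hR
    _ ≤ 2 * g - 1 := by omega

theorem natDegree_OmegaPoly_le (hq : Function.Injective q) :
    (OmegaPoly q w a).natDegree ≤ g := by
  refine (natDegree_sub_le _ _).trans (max_le ?_ ((natDegree_C_mul_le _ _).trans ?_))
  · exact (natDegree_le_of_degree_le (Lagrange.degree_interpolate_lt _ hq.injOn).le).trans_eq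
      (card_fin g)
  · simp [Lagrange.natDegree_nodal]

theorem degree_A12Poly_mul_OmegaPoly_lt (hq : Function.Injective q) :
    (A12Poly q w a * OmegaPoly q w a).degree < ↑(3 * g) := by
  obtain rfl | hg := g.eq_zero_or_pos
  · simp [A12Poly]
  refine degree_le_natDegree.trans_lt (WithBot.coe_lt_coe.2 ?_)
  calc _ ≤ (2 * g - 1) + g :=
        natDegree_mul_le_of_le (natDegree_A12Poly_le w a hq) (natDegree_OmegaPoly_le w a hq)
    _ < 3 * g := by omega

end Residues

theorem sum_beta_eq_neg_genus {g N : ℕ} (hN : N = 2 * g + 1)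
    (u : Fin N → ℂ) (q w a : Fin g → ℂ)
    (hu : ∀ m n : Fin N, m ≠ n → u m ≠ u n)
    (hq : ∀ i j : Fin g, i ≠ j → q i ≠ q j)
    (hqu : ∀ (j : Fin g) (n : Fin N), q j ≠ u n)
    (hw : ∀ j, (w j) ^ 2 * ∏ m, (q j - u m) = 1) :
    ∑ n, betaCoef u q w a n = -(g : ℂ) := by
  have hq' : Function.Injective q := fun i j h => not_imp_not.1 (hq i j) h
  have hu' : Function.Injective u := fun m n h => not_imp_not.1 (hu m n) h
  have hdeg : (A12Poly q w a * OmegaPoly q w a).degree <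
      ↑(#(univ : Finset (Fin g ⊕ Fin N)) - 1) := by
    simpa [hN, show g + (2 * g + 1) - 1 = 3 * g by omega] using
      degree_A12Poly_mul_OmegaPoly_lt w a hq'
  have hsum := Lagrange.sum_eval_div_prod_erase_eq_zero (hq'.sumElim hu' hqu).injOn hdeg
  simp only [Fintype.sum_sum_type, Sum.elim_inl, Sum.elim_inr,
    eval_div_prod_erase_inl_eq_one u w a hq' (hw _),
    ← betaCoef_eq_eval_div u w a fun j => hqu j _, sum_const, card_univ, Fintype.card_fin,
    nsmul_one] at hsum
  linear_combination hsum
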